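/- Let X be a Banach space and let (A_m)_{m∈ℤ} be a sequence of bounded linear operators on X admitting an exponential trichotomy with constants C, λ > 0. Then the linear system x_{n+1} = A_n x_n has the ℓ^∞-Lipschitz shadowing property: for every ε > 0 and every sequence (y_n)_{n∈ℤ} ⊂ X with sup_{n∈ℤ} ‖y_{n+1} − A_n y_n‖ ≤ ε(1−e^{−λ})/(2C(1+e^{−λ})), there exists a sequence (x_n)_{n∈ℤ} with x_{n+1} = A_n x_n for all n ∈ ℤ and sup_{n∈ℤ} ‖x_n − y_n‖ ≤ ε. -/

import Mathlib

open scoped ENNReal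

/-- The forward products `𝒜(m,n) = A_{m-1} ⋯ A_n` (equal to the identity when `m ≤ n`). -/
noncomputable def calA {X : Type*} [NormedAddCommGroup X] [NormedSpace ℝ X]
    (A : ℤ → X →L[ℝ] X) (m n : ℤ) : X →L[ℝ] X :=
  (List.range (m - n).toNat).foldl (fun B k => (A (n + (k : ℤ))).comp B)
    (ContinuousLinearMap.id ℝ X)

/-- The sequence `(A_m)_{m ∈ ℤ}` admits an exponential trichotomy with constants `C, lam > 0`.
The projections are `P 0 = P¹` (stable), `P 1 = P²` (unstable) and `P 2 = P³` (central).
For `m ≤ n`, the operator `𝒜(m,n)` (the inverse of `𝒜(n,m)` restricted to `Ker P¹_m`)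
is described implicitly: `w = 𝒜(m,n) P^i_n x` iff `w ∈ Ker P¹_m` and `𝒜(n,m) w = P^i_n x`. -/
def ExpTrichotomy {X : Type*} [NormedAddCommGroup X] [NormedSpace ℝ X]
    (A : ℤ → X →L[ℝ] X) (C lam : ℝ) : Prop :=
  ∃ P : Fin 3 → ℤ → X →L[ℝ] X,
    (∀ m, P 0 m + P 1 m + P 2 m = ContinuousLinearMap.id ℝ X) ∧
    (∀ i m, (P i m).comp (P i m) = P i m) ∧
    (∀ i j m, i ≠ j → (P i m).comp (P j m) = 0) ∧
    (∀ i m, (P i (m + 1)).comp (A m) = (A m).comp (P i m)) ∧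
    (∀ m, Set.BijOn (A m) (LinearMap.ker (P 0 m : X →ₗ[ℝ] X) : Set X)
      (LinearMap.ker (P 0 (m + 1) : X →ₗ[ℝ] X) : Set X)) ∧
    (∀ m n : ℤ, n ≤ m → ‖(calA A m n).comp (P 0 n)‖ ≤ C * Real.exp (-lam * (m - n))) ∧
    (∀ m n : ℤ, m ≤ n → ∀ x w : X, w ∈ LinearMap.ker (P 0 m : X →ₗ[ℝ] X) →
      calA A n m w = P 1 n x → ‖w‖ ≤ C * Real.exp (-lam * (n - m)) * ‖x‖) ∧
    (∀ m n : ℤ, n ≤ m → ‖(calA A m n).comp (P 2 n)‖ ≤ C * Real.exp (-lam * (m - n))) ∧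
    (∀ m n : ℤ, m ≤ n → ∀ x w : X, w ∈ LinearMap.ker (P 0 m : X →ₗ[ℝ] X) →
      calA A n m w = P 2 n x → ‖w‖ ≤ C * Real.exp (-lam * (n - m)) * ‖x‖)

/-!
Let `z n = y (n + 1) - A n (y n)`, so `‖z n‖ ≤ δ`. The `P¹`-component of `z` is summed forward
along the cocycle `𝒜`, and the `P²`- and `P³`-components are pulled back through the inverse of `𝒜`
on `Ker P¹`; by the trichotomy estimates these series converge geometrically with ratio `e^{-λ}`.
Their combination `w` is a bounded solution of `w (n + 1) = A n (w n) - z n` with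
`‖w n‖ ≤ Cδ (1 + 2e^{-λ}) / (1 - e^{-λ}) ≤ ε`, and `x = y + w` is a true orbit.
-/

open Function Set

section Cocycle

variable {X : Type*} [NormedAddCommGroup X] [NormedSpace ℝ X] (A : ℤ → X →L[ℝ] X)

lemma calA_self (n : ℤ) : calA A n n = ContinuousLinearMap.id ℝ X := by
  simp [calA]

lemma calA_succ_left {m n : ℤ} (h : n ≤ m) : calA A (m + 1) n = (A m).comp (calA A m n) := by
  have hlen : (m + 1 - n).toNat = (m - n).toNat + 1 := by omega
  have hlast : n + ((m - n).toNat : ℤ) = m := by omega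
  simp only [calA, hlen, List.range_succ, List.flatMap_append, List.flatMap_cons, List.flatMap_nil,
    List.bind_eq_flatMap, List.foldl_append, List.foldl_cons, List.foldl_nil, List.pure_def, hlast]

lemma calA_succ_self (m : ℤ) : calA A (m + 1) m = A m := by
  rw [calA_succ_left A le_rfl, calA_self]
  rfl

lemma calA_apply_succ_right {m n : ℤ} (h : m + 1 ≤ n) (x : X) :
    calA A n (m + 1) (A m x) = calA A n m x := by
  induction n, h using Int.leInduction with
  | base => rw [calA_self, calA_succ_self]; rfl
  | succ n hn ih =>
    rw [calA_succ_left A hn, calA_succ_left A (by omega : m ≤ n)]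
    exact congrArg (A n) ih

lemma bijOn_calA {S : ℤ → Set X} (hS : ∀ m, BijOn (A m) (S m) (S (m + 1))) {m n : ℤ}
    (h : m ≤ n) : BijOn (calA A n m) (S m) (S n) := by
  induction n, h using Int.leInduction with
  | base => rw [calA_self, ContinuousLinearMap.coe_id']; exact bijOn_id (S m)
  | succ n hn ih => rw [calA_succ_left A hn, ContinuousLinearMap.coe_comp]; exact (hS n).comp ih

end Cocycle

lemma norm_tsum_le_of_le_geometric {E : Type*} [SeminormedAddCommGroup E] {f : ℕ → E}
    {a q : ℝ} (hq₀ : 0 ≤ q) (hq₁ : q < 1) (hf : ∀ k, ‖f k‖ ≤ a * q ^ k) :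
    ‖∑' k, f k‖ ≤ a / (1 - q) :=
  tsum_of_norm_bounded ((hasSum_geometric_of_lt_one hq₀ hq₁).mul_left a) hf

lemma exp_neg_mul_intCast_sub (lam : ℝ) {m n : ℤ} {k : ℕ} (h : m = n + k) :
    Real.exp (-lam * (m - n)) = Real.exp (-lam) ^ k := by
  rw [← Real.exp_nat_mul, h]
  push_cast
  ring_nf

section InhomogeneousEquation

variable {X : Type*} [NormedAddCommGroup X] [NormedSpace ℝ X] [CompleteSpace X]
  (A : ℤ → X →L[ℝ] X) {z : ℤ → X} {C lam δ : ℝ}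

/-- The bounded solution is `u m = ∑_{k ≥ 0} 𝒜(m, m-k) Q_{m-k} z_{m-1-k}`. -/
lemma exists_bounded_forward_solution {Q : ℤ → X →L[ℝ] X} (hlam : 0 < lam)
    (hQ : ∀ m n : ℤ, n ≤ m → ‖(calA A m n).comp (Q n)‖ ≤ C * Real.exp (-lam * (m - n)))
    (hz : ∀ n, ‖z n‖ ≤ δ) :
    ∃ u : ℤ → X, (∀ m, u (m + 1) = A m (u m) + Q (m + 1) (z m)) ∧
      ∀ m, ‖u m‖ ≤ C * δ / (1 - Real.exp (-lam)) := by
  set q := Real.exp (-lam)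
  have hq₀ : 0 ≤ q := (Real.exp_pos _).le
  have hq₁ : q < 1 := Real.exp_lt_one_iff.mpr (by linarith)
  have hδ : 0 ≤ δ := (norm_nonneg _).trans (hz 0)
  set f : ℤ → ℕ → X := fun m k => calA A m (m - k) (Q (m - k) (z (m - 1 - k)))
  have hf_le : ∀ m k, ‖f m k‖ ≤ C * δ * q ^ k := fun m k => calc
    ‖f m k‖ ≤ ‖(calA A m (m - k)).comp (Q (m - k))‖ * δ :=
        ((calA A m (m - k)).comp (Q (m - k))).le_of_opNorm_le_of_le le_rfl (hz _)
    _ ≤ C * q ^ k * δ := by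
        gcongr
        have h := hQ m (m - k) (by omega)
        rwa [exp_neg_mul_intCast_sub lam (sub_add_cancel m (k : ℤ)).symm] at h
    _ = C * δ * q ^ k := by ring
  have hf_summable : ∀ m, Summable (f m) := fun m =>
    .of_norm_bounded ((summable_geometric_of_lt_one hq₀ hq₁).mul_left _) (hf_le m)
  have hf_shift : ∀ m k, A m (f m k) = f (m + 1) (k + 1) := by
    intro m k
    simp only [f]
    rw [show m + 1 - ((k + 1 : ℕ) : ℤ) = m - k by push_cast; ring,
      show m + 1 - 1 - ((k + 1 : ℕ) : ℤ) = m - 1 - k by push_cast; ring,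
      calA_succ_left A (by omega : m - (k : ℤ) ≤ m)]
    rfl
  refine ⟨fun m => ∑' k, f m k, fun m => ?_, fun m => norm_tsum_le_of_le_geometric hq₀ hq₁ (hf_le m)⟩
  dsimp only
  rw [(hf_summable (m + 1)).tsum_eq_zero_add, (A m).map_tsum (hf_summable m)]
  simp [f, hf_shift, calA_self, add_comm]

/-- The bounded solution is `v m = ∑_{k ≥ 0} 𝒜(m, m+k+1) Q_{m+k+1} z_{m+k}`, where
`𝒜(m, n)` for `m ≤ n` inverts `𝒜(n, m)` on `S m`. -/
lemma exists_bounded_backward_solution {S : ℤ → Set X} (hS : ∀ m, BijOn (A m) (S m) (S (m + 1)))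
    {Q : ℤ → X →L[ℝ] X} (hQS : ∀ n x, Q n x ∈ S n) (hC : 0 ≤ C) (hlam : 0 < lam)
    (hQ : ∀ m n : ℤ, m ≤ n → ∀ x w : X, w ∈ S m → calA A n m w = Q n x →
      ‖w‖ ≤ C * Real.exp (-lam * (n - m)) * ‖x‖)
    (hz : ∀ n, ‖z n‖ ≤ δ) :
    ∃ v : ℤ → X, (∀ m, v (m + 1) = A m (v m) - Q (m + 1) (z m)) ∧
      ∀ m, ‖v m‖ ≤ C * δ * Real.exp (-lam) / (1 - Real.exp (-lam)) := by
  set q := Real.exp (-lam)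
  have hq₀ : 0 ≤ q := (Real.exp_pos _).le
  have hq₁ : q < 1 := Real.exp_lt_one_iff.mpr (by linarith)
  set G : ℤ → ℤ → X := fun m n => invFunOn (calA A n m) (S m) (Q n (z (n - 1)))
  have hG : ∀ m n, m ≤ n → G m n ∈ S m ∧ calA A n m (G m n) = Q n (z (n - 1)) :=
    fun m n h => invFunOn_pos ((bijOn_calA A hS h).surjOn (hQS n _))
  have hG_shift : ∀ m n, m + 1 ≤ n → A m (G m n) = G (m + 1) n := fun m n h =>
    (bijOn_calA A hS h).injOn ((hS m).mapsTo (hG m n (by omega)).1) (hG (m + 1) n h).1 <| by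
      rw [calA_apply_succ_right A h, (hG m n (by omega)).2, (hG (m + 1) n h).2]
  set g : ℤ → ℕ → X := fun m k => G m (m + k + 1)
  have hg_le : ∀ m k, ‖g m k‖ ≤ C * δ * q * q ^ k := fun m k => calc
    ‖g m k‖ ≤ C * q ^ (k + 1) * ‖z (m + k + 1 - 1)‖ := by
        have h := hQ m _ (by omega) _ _ (hG m (m + k + 1) (by omega)).1 (hG m _ (by omega)).2
        rwa [exp_neg_mul_intCast_sub lam (k := k + 1) (by push_cast; ring)] at h
    _ ≤ C * q ^ (k + 1) * δ := by gcongr; exact hz _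
    _ = C * δ * q * q ^ k := by ring
  have hg_summable : ∀ m, Summable (g m) := fun m =>
    .of_norm_bounded ((summable_geometric_of_lt_one hq₀ hq₁).mul_left _) (hg_le m)
  have hg_shift : ∀ m k, A m (g m (k + 1)) = g (m + 1) k := by
    intro m k
    simp only [g]
    rw [hG_shift m _ (by omega)]
    congr 1
    push_cast
    ring
  have hg_zero : ∀ m, A m (g m 0) = Q (m + 1) (z m) := fun m => by
    simpa [g, calA_succ_self] using (hG m (m + 1) (by omega)).2
  refine ⟨fun m => ∑' k, g m k, fun m => ?_, fun m => ?_⟩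
  · dsimp only
    rw [(A m).map_tsum (hg_summable m),
      ((A m).summable (hg_summable m)).tsum_eq_zero_add]
    simp [hg_shift, hg_zero]
  · simpa [mul_assoc] using norm_tsum_le_of_le_geometric hq₀ hq₁ (hg_le m)

end InhomogeneousEquation

lemma shadowing_bound {C q ε δ : ℝ} (hC : 0 < C) (hq₀ : 0 ≤ q) (hq₁ : q < 1) (hε : 0 < ε)
    (hδ : δ = ε * (1 - q) / (2 * C * (1 + q))) :
    C * δ / (1 - q) + C * δ * q / (1 - q) + C * δ * q / (1 - q) ≤ ε := by
  have hCδ : C * δ = ε * (1 - q) / (2 * (1 + q)) := by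
    rw [hδ]
    field_simp
  have hq : 0 < 1 - q := by linarith
  rw [hCδ]
  field_simp
  nlinarith

/-- If `(A_m)_{m∈ℤ}` admits an exponential trichotomy with constants `C, lam > 0`, then the
linear system `x_{n+1} = A_n x_n` has the `ℓ^∞`-Lipschitz shadowing property with constant
`L = (1-e^{-lam})/(2C(1+e^{-lam}))`. -/
theorem trichotomy_linear_lipschitz_shadowing
    {X : Type*} [NormedAddCommGroup X] [NormedSpace ℝ X] [CompleteSpace X]
    (A : ℤ → X →L[ℝ] X) (C lam : ℝ) (hC : 0 < C) (hlam : 0 < lam)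
    (h : ExpTrichotomy A C lam) :
    ∀ ε : ℝ, 0 < ε → ∀ y : ℤ → X,
      (∀ n : ℤ, ‖y (n + 1) - A n (y n)‖
        ≤ ε * (1 - Real.exp (-lam)) / (2 * C * (1 + Real.exp (-lam)))) →
      ∃ x : ℤ → X, (∀ n : ℤ, x (n + 1) = A n (x n)) ∧
        ∀ n : ℤ, ‖x n - y n‖ ≤ ε := by
  obtain ⟨P, hP_sum, -, hP_orth, -, hA_bij, hP₀, hP₁, -, hP₂⟩ := h
  intro ε hε y hy
  have hP_ker : ∀ i, i ≠ 0 → ∀ n x, P i n x ∈ (LinearMap.ker (P 0 n : X →ₗ[ℝ] X) : Set X) :=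
    fun i hi n x => congr($(hP_orth 0 i n hi.symm) x)
  obtain ⟨u, hu_rec, hu_le⟩ := exists_bounded_forward_solution A hlam hP₀ hy
  obtain ⟨v₁, hv₁_rec, hv₁_le⟩ :=
    exists_bounded_backward_solution A hA_bij (hP_ker 1 (by decide)) hC.le hlam hP₁ hy
  obtain ⟨v₂, hv₂_rec, hv₂_le⟩ :=
    exists_bounded_backward_solution A hA_bij (hP_ker 2 (by decide)) hC.le hlam hP₂ hy
  refine ⟨fun n => y n - u n + v₁ n + v₂ n, fun n => ?_, fun n => ?_⟩
  · have hz := congr($(hP_sum (n + 1)) (y (n + 1) - A n (y n)))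
    simp only [add_apply, ContinuousLinearMap.id_apply] at hz
    simp only [hu_rec, hv₁_rec, hv₂_rec, (A n).map_add, (A n).map_sub]
    linear_combination (norm := module) -hz
  · calc ‖y n - u n + v₁ n + v₂ n - y n‖ = ‖-u n + v₁ n + v₂ n‖ := by congr 1; abel
      _ ≤ ‖u n‖ + ‖v₁ n‖ + ‖v₂ n‖ := by
        simpa only [norm_neg] using norm_add₃_le (a := -u n) (b := v₁ n) (c := v₂ n)
      _ ≤ ε := (add_le_add_three (hu_le n) (hv₁_le n) (hv₂_le n)).trans <|
        shadowing_bound hC (Real.exp_pos _).le (Real.exp_lt_one_iff.mpr (by linarith)) hε rfl
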